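/- There is a constant c > 0 such that for every n ≥ 1 there exists an LTLf formula ψ_n over the propositions Prop = {0, 1, #, &} with |ψ_n| ≤ c·n² such that every nondeterministic Büchi automaton over the alphabet 2^Prop recognizing the prefix language pref(ψ_n) has at least 2^{2^n} states. Consequently, nondeterministic Büchi automata for prefix languages of LTLf formulas ψ require 2^{2^{Ω(√|ψ|)}} states in the worst case. -/

import Mathlib

/-- Syntax of LTLf (and LTL) formulas over atomic propositions `P`. -/
inductive LTLf (P : Type) : Type where
  | tt : LTLf P
  | ff : LTLf P
  | atom : P → LTLf P
  | not : LTLf P → LTLf P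
  | and : LTLf P → LTLf P → LTLf P
  | next : LTLf P → LTLf P
  | untl : LTLf P → LTLf P → LTLf P

/-- LTLf satisfaction at position `i` of a finite trace `ρ` over `2^P`. -/
def LTLf.SatAt {P : Type} : LTLf P → List (Set P) → ℕ → Prop
  | .tt, _, _ => True
  | .ff, _, _ => False
  | .atom a, ρ, i => a ∈ ρ.getD i ∅
  | .not φ, ρ, i => ¬ LTLf.SatAt φ ρ i
  | .and φ ψ, ρ, i => LTLf.SatAt φ ρ i ∧ LTLf.SatAt ψ ρ i
  | .next φ, ρ, i => i + 1 < ρ.length ∧ LTLf.SatAt φ ρ (i + 1)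
  | .untl φ ψ, ρ, i => ∃ j, i ≤ j ∧ j < ρ.length ∧ LTLf.SatAt ψ ρ j ∧
      ∀ k, i ≤ k → k < j → LTLf.SatAt φ ρ k

/-- `ρ ⊨ φ` means `ρ, 0 ⊨ φ` (intended for nonempty finite traces). -/
def LTLf.Sat {P : Type} (φ : LTLf P) (ρ : List (Set P)) : Prop :=
  LTLf.SatAt φ ρ 0

/-- The length-`n` prefix `w_0 ⋯ w_{n-1}` of an infinite word `w`. -/
def prefixWord {α : Type} (w : ℕ → α) (n : ℕ) : List α :=
  (List.range n).map w

/-- The prefix language of an LTLf formula: all infinite words every nonempty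
finite prefix of which satisfies `φ`. -/
def pref {P : Type} (φ : LTLf P) : Set (ℕ → Set P) :=
  { w | ∀ n : ℕ, 0 < n → LTLf.Sat φ (prefixWord w n) }

/-- The size (number of operators) of an LTLf formula. -/
def LTLf.size {P : Type} : LTLf P → ℕ
  | .tt => 1
  | .ff => 1
  | .atom _ => 1
  | .not φ => φ.size + 1
  | .and φ ψ => φ.size + ψ.size + 1
  | .next φ => φ.size + 1
  | .untl φ ψ => φ.size + ψ.size + 1

/-- A nondeterministic Büchi automaton over alphabet `A` with state type `S`. -/
structure NBA (A : Type) (S : Type) where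
  init : S
  trans : S → A → S → Prop
  acc : Set S

/-- `r` is a run of `M` on the infinite word `w`. -/
def NBA.IsRun {A S : Type} (M : NBA A S) (w : ℕ → A) (r : ℕ → S) : Prop :=
  r 0 = M.init ∧ ∀ i, M.trans (r i) (w i) (r (i + 1))

/-- The ω-language of a nondeterministic Büchi automaton: words admitting a run
that visits the accepting set infinitely often. -/
def NBA.Lang {A S : Type} (M : NBA A S) : Set (ℕ → A) :=
  { w | ∃ r : ℕ → S, M.IsRun w r ∧ ∀ m : ℕ, ∃ n, m ≤ n ∧ r n ∈ M.acc }


/-- Concatenation of a finite word `u` with an infinite word `v`. -/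
def wcat {α : Type} (u : List α) (v : ℕ → α) : ℕ → α :=
  fun i => if h : i < u.length then u.get ⟨i, h⟩ else v (i - u.length)

/-- The four-letter alphabet Σ = {0, 1, #, &}. -/
inductive Sig4 : Type where
  | zero : Sig4
  | one : Sig4
  | hash : Sig4
  | amp : Sig4
deriving DecidableEq

/-- Encoding of a bit as a letter in {0,1}. -/
def bitSym (b : Bool) : Sig4 := if b then Sig4.one else Sig4.zero

/-- The block `#w#` for a bit-string `w`. -/
def blk (w : List Bool) : List Sig4 :=
  Sig4.hash :: (w.map bitSym ++ [Sig4.hash])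

/-- A finite word contains no occurrence of `&`. -/
def NoAmpL (u : List Sig4) : Prop := ∀ a ∈ u, a ≠ Sig4.amp

/-- An infinite word contains no occurrence of `&`. -/
def NoAmpW (v : ℕ → Sig4) : Prop := ∀ i, v i ≠ Sig4.amp

/-- The finite word `p` occurs as a factor of the infinite word `v`. -/
def OccursInW (p : List Sig4) (v : ℕ → Sig4) : Prop :=
  ∃ i, prefixWord (fun j => v (i + j)) p.length = p

/-- The ω-language `L_n`: words `u · & · v` with `u ∈ {0,1,#}^*`, `v ∈ {0,1,#}^ω`
such that every block `#w#` (with `w ∈ {0,1}^n`) occurring in `v` also occurs in `u`. -/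
def Ln (n : ℕ) : Set (ℕ → Sig4) :=
  { x | ∃ (u : List Sig4) (v : ℕ → Sig4), NoAmpL u ∧ NoAmpW v ∧
      x = wcat (u ++ [Sig4.amp]) v ∧
      ∀ w : List Bool, w.length = n → OccursInW (blk w) v → blk w <:+: u }

/-- The language of finite words `F_n`: words `u · & · v` with `u, v ∈ {0,1,#}^*`
such that if the last `n+2` letters of `v` form a block `#w#` with `w ∈ {0,1}^n`,
then `#w#` occurs in `u`. -/
def Fn (n : ℕ) : Set (List Sig4) :=
  { x | ∃ u v : List Sig4, NoAmpL u ∧ NoAmpL v ∧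
      x = u ++ Sig4.amp :: v ∧
      ∀ w : List Bool, w.length = n → blk w <:+ v → blk w <:+: u }

namespace LB
open Sig4

/-! ### Derived LTLf operators -/

def orf (φ ψ : LTLf Sig4) : LTLf Sig4 := .not ((LTLf.not φ).and (.not ψ))
def impf (φ ψ : LTLf Sig4) : LTLf Sig4 := orf (.not φ) ψ
def Ff (φ : LTLf Sig4) : LTLf Sig4 := .untl .tt φ
def Xn : ℕ → LTLf Sig4 → LTLf Sig4
  | 0, φ => φ
  | k+1, φ => .next (Xn k φ)
def lastf : LTLf Sig4 := .not (.next .tt)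
def A0 : LTLf Sig4 := .atom .zero
def A1 : LTLf Sig4 := .atom .one
def AH : LTLf Sig4 := .atom .hash
def AA : LTLf Sig4 := .atom .amp
def bitf : LTLf Sig4 := orf A0 A1
def atomB (b : Bool) : LTLf Sig4 := .atom (bitSym b)
def EB (n i : ℕ) (b : Bool) : LTLf Sig4 :=
  Ff ((atomB b).and (Xn (n+1-i) (AH.and lastf)))
def matchi (n i : ℕ) : LTLf Sig4 :=
  (impf (Xn i A1) (EB n i true)).and (impf (Xn i A0) (EB n i false))
def mi (n i : ℕ) : LTLf Sig4 := (Xn i bitf).and (matchi n i)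
def mconj (n : ℕ) : ℕ → LTLf Sig4
  | 0 => .tt
  | k+1 => (mi n (k+1)).and (mconj n k)
def Cf (n : ℕ) : LTLf Sig4 := AH.and ((mconj n n).and (Xn (n+1) AH))
def chain : ℕ → LTLf Sig4
  | 0 => .next (AH.and lastf)
  | k+1 => .next (bitf.and (chain k))
def EWB (n : ℕ) : LTLf Sig4 := Ff (AH.and (chain n))
def psi (n : ℕ) : LTLf Sig4 :=
  impf ((EWB n).and (Ff AA)) ((LTLf.not AA).untl (Cf n))

/-! ### Semantics of derived operators -/

open LTLf

variable {ρ : List (Set Sig4)} {i : ℕ} {φ ψ : LTLf Sig4}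

lemma satAt_orf : SatAt (orf φ ψ) ρ i ↔ SatAt φ ρ i ∨ SatAt ψ ρ i := by
  simp [orf, SatAt]; tauto

lemma satAt_impf : SatAt (impf φ ψ) ρ i ↔ (SatAt φ ρ i → SatAt ψ ρ i) := by
  simp [impf, satAt_orf, SatAt]; tauto

lemma satAt_Ff : SatAt (Ff φ) ρ i ↔ ∃ j, i ≤ j ∧ j < ρ.length ∧ SatAt φ ρ j := by
  simp [Ff, SatAt]

lemma satAt_lastf : SatAt lastf ρ i ↔ ρ.length ≤ i + 1 := by
  simp [lastf, SatAt]

lemma satAt_Xn {k : ℕ} (hk : 0 < k) :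
    SatAt (Xn k φ) ρ i ↔ i + k < ρ.length ∧ SatAt φ ρ (i + k) := by
  induction k generalizing i with
  | zero => omega
  | succ k ih =>
    rcases Nat.eq_zero_or_pos k with rfl | hk'
    · simp [Xn, SatAt]
    · show SatAt (.next (Xn k φ)) ρ i ↔ _
      rw [show SatAt (.next (Xn k φ)) ρ i ↔ (i+1 < ρ.length ∧ SatAt (Xn k φ) ρ (i+1)) from Iff.rfl,
        ih hk']
      constructor
      · rintro ⟨h1, h2, h3⟩; exact ⟨by omega, by rwa [show i+(k+1) = i+1+k by omega]⟩
      · rintro ⟨h1, h2⟩; exact ⟨by omega, by omega, by rwa [show i+1+k = i+(k+1) by omega]⟩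

lemma satAt_chain {k q : ℕ} :
    SatAt (chain k) ρ q ↔ ρ.length = q + k + 2 ∧ SatAt AH ρ (q + k + 1) ∧
      ∀ i, 1 ≤ i → i ≤ k → SatAt bitf ρ (q + i) := by
  induction k generalizing q with
  | zero =>
    show SatAt (.next (AH.and lastf)) ρ q ↔ _
    rw [show SatAt (.next (AH.and lastf)) ρ q ↔ (q+1 < ρ.length ∧ SatAt (AH.and lastf) ρ (q+1)) from Iff.rfl]
    show (q+1 < ρ.length ∧ SatAt AH ρ (q+1) ∧ SatAt lastf ρ (q+1)) ↔ _
    rw [satAt_lastf]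
    constructor
    · rintro ⟨h1, h2, h3⟩; exact ⟨by omega, h2, by omega⟩
    · rintro ⟨h1, h2, _⟩; exact ⟨by omega, h2, by omega⟩
  | succ k ih =>
    show SatAt (.next (bitf.and (chain k))) ρ q ↔ _
    rw [show SatAt (.next (bitf.and (chain k))) ρ q ↔ (q+1 < ρ.length ∧ SatAt (bitf.and (chain k)) ρ (q+1)) from Iff.rfl]
    show (q+1 < ρ.length ∧ SatAt bitf ρ (q+1) ∧ SatAt (chain k) ρ (q+1)) ↔ _
    rw [ih]
    constructor
    · rintro ⟨h1, hb, h2, h3, h4⟩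
      refine ⟨by omega, by rwa [show q+(k+1)+1 = q+1+k+1 by omega], ?_⟩
      intro j hj1 hj2
      rcases Nat.eq_or_lt_of_le hj1 with h | h
      · rwa [← h]
      · have := h4 (j-1) (by omega) (by omega)
        rwa [show q+1+(j-1) = q+j by omega] at this
    · rintro ⟨h1, h2, h3⟩
      refine ⟨by omega, by simpa using h3 1 le_rfl (by omega), by omega,
        by rwa [show q+1+k+1 = q+(k+1)+1 by omega], ?_⟩
      intro j hj1 hj2
      have := h3 (j+1) (by omega) (by omega)
      rwa [show q+(j+1) = q+1+j by omega] at this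

lemma satAt_mconj {n k p : ℕ} :
    SatAt (mconj n k) ρ p ↔ ∀ i, 1 ≤ i → i ≤ k → SatAt (mi n i) ρ p := by
  induction k with
  | zero => simp [mconj, SatAt]; omega
  | succ k ih =>
    show (SatAt (mi n (k+1)) ρ p ∧ SatAt (mconj n k) ρ p) ↔ _
    rw [ih]
    constructor
    · rintro ⟨h1, h2⟩ i hi1 hi2
      rcases Nat.lt_or_ge i (k+1) with h | h
      · exact h2 i hi1 (by omega)
      · rwa [show i = k+1 by omega]
    · intro h; exact ⟨h (k+1) (by omega) le_rfl, fun i h1 h2 => h i h1 (by omega)⟩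

end LB
namespace LB
open Sig4 LTLf

/-! ### Traces -/

def trace (x : ℕ → Sig4) (m : ℕ) : List (Set Sig4) :=
  (prefixWord x m).map (fun a => ({a} : Set Sig4))

lemma length_trace {x m} : (trace x m).length = m := by
  simp [trace, prefixWord]

lemma trace_getD {x : ℕ → Sig4} {m i : ℕ} (h : i < m) :
    (trace x m).getD i ∅ = {x i} := by
  rw [List.getD_eq_getElem _ _ (by simp [length_trace, h] : i < (trace x m).length)]
  simp [trace, prefixWord, List.getElem_map, List.getElem_range, h]

lemma satAt_atom_iff {x : ℕ → Sig4} {m i : ℕ} {a : Sig4} :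
    SatAt (.atom a) (trace x m) i ↔ i < m ∧ x i = a := by
  show a ∈ (trace x m).getD i ∅ ↔ _
  rcases Nat.lt_or_ge i m with h | h
  · rw [trace_getD h]; simp only [Set.mem_singleton_iff]
    constructor
    · intro ha; exact ⟨h, ha.symm⟩
    · rintro ⟨_, rfl⟩; rfl
  · rw [List.getD_eq_default _ _ (by simpa [length_trace] using h)]
    simp; omega

lemma satAt_AH {x m i} : SatAt AH (trace x m) i ↔ i < m ∧ x i = hash := satAt_atom_iff
lemma satAt_AA {x m i} : SatAt AA (trace x m) i ↔ i < m ∧ x i = amp := satAt_atom_iff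
lemma satAt_A0 {x m i} : SatAt A0 (trace x m) i ↔ i < m ∧ x i = zero := satAt_atom_iff
lemma satAt_A1 {x m i} : SatAt A1 (trace x m) i ↔ i < m ∧ x i = one := satAt_atom_iff
lemma satAt_bitf {x m i} :
    SatAt bitf (trace x m) i ↔ i < m ∧ (x i = zero ∨ x i = one) := by
  rw [bitf, satAt_orf, satAt_A0, satAt_A1]; tauto

/-! ### bit/block facts -/

lemma bitSym_ne_hash {b} : bitSym b ≠ hash := by cases b <;> simp [bitSym]
lemma bitSym_ne_amp {b} : bitSym b ≠ amp := by cases b <;> simp [bitSym]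
lemma bitSym_or {b} : bitSym b = zero ∨ bitSym b = one := by cases b <;> simp [bitSym]
lemma bitSym_inj {b b'} (h : bitSym b = bitSym b') : b = b' := by
  cases b <;> cases b' <;> simp_all [bitSym]

lemma length_blk {w} : (blk w).length = w.length + 2 := by simp [blk]

lemma blk_getD_zero {w d} : (blk w).getD 0 d = hash := rfl

lemma blk_getD_last {w : List Bool} {d} : (blk w).getD (w.length + 1) d = hash := by
  show (w.map bitSym ++ [hash]).getD w.length d = hash
  rw [List.getD_append_right _ _ _ _ (by simp)]
  simp

lemma blk_getD_bit {w : List Bool} {i d} (h : i < w.length) :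
    (blk w).getD (i+1) d = bitSym (w.getD i false) := by
  show (w.map bitSym ++ [hash]).getD i d = _
  rw [List.getD_append _ _ _ _ (by simpa using h),
    List.getD_eq_getElem _ _ (by simpa using h), List.getD_eq_getElem _ _ h,
    List.getElem_map]

lemma mem_blk_ne_amp {w a} (h : a ∈ blk w) : a ≠ amp := by
  rintro rfl
  rw [blk, List.mem_cons, List.mem_append] at h
  rcases h with h | h | h
  · exact absurd h.symm (by simp)
  · rw [List.mem_map] at h; obtain ⟨b, _, hb⟩ := h; exact bitSym_ne_amp hb
  · simp at h

/-! ### blocks -/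

def blocks (ws : List (List Bool)) : List Sig4 := (ws.map blk).flatten

lemma blocks_nil : blocks [] = [] := rfl
lemma blocks_cons {w ws} : blocks (w :: ws) = blk w ++ blocks ws := rfl

lemma mem_blocks_ne_amp {ws a} (h : a ∈ blocks ws) : a ≠ amp := by
  induction ws with
  | nil => simp [blocks_nil] at h
  | cons w ws ih =>
    rw [blocks_cons, List.mem_append] at h
    rcases h with h | h
    · exact mem_blk_ne_amp h
    · exact ih h

lemma infix_blk_blocks {ws : List (List Bool)} {w} (h : w ∈ ws) :
    blk w <:+: blocks ws :=
  List.infix_of_mem_flatten (List.mem_map_of_mem (f := blk) h)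

/-- pointwise equality on a window gives an infix occurrence -/
lemma infix_of_getD {u p : List Sig4} {j : ℕ} {d : Sig4}
    (hlen : j + p.length ≤ u.length)
    (h : ∀ i, i < p.length → u.getD (j+i) d = p.getD i d) : p <:+: u := by
  have hp : p = (u.drop j).take p.length := by
    apply List.ext_getElem (by simp; omega)
    intro i h1 h2
    rw [List.getElem_take, List.getElem_drop]
    have := h i h1
    rw [List.getD_eq_getElem _ _ (by omega), List.getD_eq_getElem _ _ h1] at this
    exact this.symm
  rw [hp]
  exact ((List.take_prefix _ _).isInfix).trans ((List.drop_suffix _ _).isInfix)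

/-- read a window of an infix occurrence -/
lemma getD_of_infix {u p t s : List Sig4} {d : Sig4}
    (h : u = s ++ (p ++ t)) {i : ℕ} (hi : i < p.length) :
    u.getD (s.length + i) d = p.getD i d := by
  subst h
  rw [List.getD_append_right _ _ _ _ (by omega),
    List.getD_append _ _ _ _ (by simpa using hi)]
  congr 1; omega

/-- Key combinatorial lemma: a `#w#`-pattern inside a concatenation of
blocks must be one of the blocks. -/
lemma mem_of_pattern {n : ℕ} (hn : 1 ≤ n) {d : Sig4} :
    ∀ (ws : List (List Bool)), (∀ w ∈ ws, w.length = n) →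
    ∀ (j : ℕ) (w : List Bool), w.length = n → j + (n+2) ≤ (blocks ws).length →
    (∀ i, i ≤ n+1 → (blocks ws).getD (j+i) d = (blk w).getD i d) → w ∈ ws := by
  intro ws
  induction ws with
  | nil => intro _ j w _ hle _; simp [blocks_nil] at hle
  | cons w0 ws ih =>
    intro hlen j w hw hle hpt
    have hw0 : w0.length = n := hlen w0 (by simp)
    have hblk0 : (blk w0).length = n + 2 := by rw [length_blk, hw0]
    rw [blocks_cons] at hle hpt
    rcases Nat.lt_or_ge j (n+2) with hj | hj
    · rcases Nat.eq_zero_or_pos j with rfl | hj0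
      · -- window is exactly blk w0
        have heq : ∀ i, i ≤ n+1 → (blk w0).getD i d = (blk w).getD i d := by
          intro i hi
          have := hpt i hi
          rw [List.getD_append _ _ _ _ (by omega)] at this
          simpa using this
        have hww0 : w = w0 := by
          apply List.ext_getElem (by omega)
          intro i h1 h2
          have := heq (i+1) (by omega)
          rw [blk_getD_bit (by omega), blk_getD_bit (by omega)] at this
          have := bitSym_inj this
          rwa [List.getD_eq_getElem _ _ h1, List.getD_eq_getElem _ _ h2, eq_comm] at this
        rw [hww0]
        exact List.mem_cons_self
      · exfalso
        rcases Nat.lt_or_ge j (n+1) with hj1 | hj1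
        · -- u position j is a bit but pattern says hash
          have := hpt 0 (by omega)
          rw [Nat.add_zero, List.getD_append _ _ _ _ (by omega), blk_getD_zero] at this
          obtain ⟨k, rfl⟩ : ∃ k, j = k + 1 := ⟨j - 1, by omega⟩
          rw [blk_getD_bit (by omega)] at this
          exact bitSym_ne_hash this
        · -- j = n+1 : position j+1 is start of next block (a hash), pattern says bit
          have hj2 : j = n + 1 := by omega
          have := hpt 1 (by omega)
          rw [blk_getD_bit (by omega)] at this
          rw [List.getD_append_right _ _ _ _ (by omega)] at this
          have h0 : j + 1 - (blk w0).length = 0 := by omega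
          rw [h0] at this
          -- blocks ws must be nonempty
          cases ws with
          | nil => simp [blocks_nil] at hle; omega
          | cons w1 ws' =>
            rw [blocks_cons, List.getD_append _ _ _ _ (by
                rw [length_blk, hlen w1 (by simp)]; omega), blk_getD_zero] at this
            exact bitSym_ne_hash this.symm
    · right
      rw [List.length_append, hblk0] at hle
      apply ih (fun w' hw' => hlen w' (by simp [hw'])) (j - (n+2)) w hw (by omega)
      intro i hi
      have := hpt i hi
      rwa [List.getD_append_right _ _ _ _ (by rw [hblk0]; omega),
        show j + i - (blk w0).length = j - (n+2) + i by rw [hblk0]; omega] at this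

end LB
namespace LB
open Sig4 LTLf

/-! ### The infinite words `u & v 0^ω` -/

def word (u v : List Sig4) : ℕ → Sig4 :=
  wcat (u ++ [Sig4.amp]) (wcat v (fun _ => Sig4.zero))

lemma word_lt {u v : List Sig4} {i : ℕ} (h : i < u.length) :
    word u v i = u.getD i Sig4.zero := by
  have h' : i < (u ++ [Sig4.amp]).length := by simp; omega
  simp only [word, wcat, dif_pos h']
  rw [List.get_eq_getElem, List.getElem_append_left h, List.getD_eq_getElem _ _ h]

lemma word_amp {u v : List Sig4} : word u v u.length = Sig4.amp := by
  have h' : u.length < (u ++ [Sig4.amp]).length := by simp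
  simp only [word, wcat, dif_pos h']
  rw [List.get_eq_getElem, List.getElem_append_right (le_refl _)]
  simp

lemma word_v {u v : List Sig4} {i : ℕ} (h : i < v.length) :
    word u v (u.length + 1 + i) = v.getD i Sig4.zero := by
  have h' : ¬ (u.length + 1 + i < (u ++ [Sig4.amp]).length) := by simp; omega
  simp only [word, wcat, dif_neg h']
  have : u.length + 1 + i - (u ++ [Sig4.amp]).length = i := by simp
  rw [this, dif_pos h, List.get_eq_getElem, List.getD_eq_getElem _ _ h]

lemma word_big {u v : List Sig4} {i : ℕ} (h : v.length ≤ i) :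
    word u v (u.length + 1 + i) = Sig4.zero := by
  have h' : ¬ (u.length + 1 + i < (u ++ [Sig4.amp]).length) := by simp; omega
  simp only [word, wcat, dif_neg h']
  have : u.length + 1 + i - (u ++ [Sig4.amp]).length = i := by simp
  rw [this, dif_neg (by omega)]

lemma getD_mem {u : List Sig4} {i : ℕ} {d : Sig4} (h : i < u.length) :
    u.getD i d ∈ u := by
  rw [List.getD_eq_getElem _ _ h]; exact List.getElem_mem h

lemma word_amp_iff {u v : List Sig4} (hu : ∀ a ∈ u, a ≠ Sig4.amp)
    (hv : ∀ a ∈ v, a ≠ Sig4.amp) {j : ℕ} :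
    word u v j = Sig4.amp ↔ j = u.length := by
  constructor
  · intro h
    rcases Nat.lt_trichotomy j u.length with hj | hj | hj
    · rw [word_lt hj] at h
      exact absurd h (hu _ (getD_mem hj))
    · exact hj
    · exfalso
      obtain ⟨i, rfl⟩ : ∃ i, j = u.length + 1 + i := ⟨j - u.length - 1, by omega⟩
      rcases Nat.lt_or_ge i v.length with hi | hi
      · rw [word_v hi] at h
        exact absurd h (hv _ (getD_mem hi))
      · rw [word_big hi] at h; exact absurd h (by simp)
  · rintro rfl; exact word_amp

/-! ### basic satisfaction rewrites -/

lemma satAt_and {ρ i} {φ ψ : LTLf Sig4} :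
    SatAt (φ.and ψ) ρ i ↔ SatAt φ ρ i ∧ SatAt ψ ρ i := Iff.rfl
lemma satAt_not {ρ i} {φ : LTLf Sig4} :
    SatAt (φ.not) ρ i ↔ ¬ SatAt φ ρ i := Iff.rfl
lemma satAt_untl {ρ i} {φ ψ : LTLf Sig4} :
    SatAt (φ.untl ψ) ρ i ↔ ∃ j, i ≤ j ∧ j < ρ.length ∧ SatAt ψ ρ j ∧
      ∀ k, i ≤ k → k < j → SatAt φ ρ k := Iff.rfl

lemma satAt_atomB {x m i b} :
    SatAt (atomB b) (trace x m) i ↔ i < m ∧ x i = bitSym b := satAt_atom_iff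

lemma satAt_EB_iff {x : ℕ → Sig4} {m n i p : ℕ} {b : Bool} (hi2 : i ≤ n) :
    SatAt (EB n i b) (trace x m) p ↔
      ∃ j, p ≤ j ∧ j + (n+1-i) + 1 = m ∧ x j = bitSym b ∧ x (j + (n+1-i)) = hash := by
  have hpos : 0 < n + 1 - i := by omega
  rw [EB, satAt_Ff]
  constructor
  · rintro ⟨j, hj1, hj2, hsat⟩
    rw [satAt_and, satAt_atomB, satAt_Xn hpos, satAt_and, satAt_AH, satAt_lastf,
      length_trace] at hsat
    obtain ⟨⟨_, hb⟩, hlt, ⟨_, hh⟩, hlast⟩ := hsat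
    exact ⟨j, hj1, by omega, hb, hh⟩
  · rintro ⟨j, hj1, hj2, hb, hh⟩
    refine ⟨j, hj1, by rw [length_trace]; omega, ?_⟩
    rw [satAt_and, satAt_atomB, satAt_Xn hpos, satAt_and, satAt_AH, satAt_lastf,
      length_trace]
    exact ⟨⟨by omega, hb⟩, by omega, ⟨by omega, hh⟩, by omega⟩

end LB
namespace LB
open Sig4 LTLf

/-- GOOD (general form): every prefix of `u & v 0^ω` satisfies `psi n`,
provided `u, v` are &-free and every `#w#`-window of `v` is an infix of `u`. -/
lemma good {n : ℕ} (hn : 1 ≤ n) {u v : List Sig4}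
    (hu_amp : ∀ a ∈ u, a ≠ Sig4.amp) (hv_amp : ∀ a ∈ v, a ≠ Sig4.amp)
    (hpat_v : ∀ (j : ℕ) (w : List Bool), w.length = n → j + (n+2) ≤ v.length →
      (∀ i, i ≤ n+1 → v.getD (j+i) Sig4.zero = (blk w).getD i Sig4.zero) →
      blk w <:+: u)
    (m : ℕ) :
    LTLf.Sat (psi n) (trace (word u v) m) := by
  rw [LTLf.Sat, psi, satAt_impf, satAt_and]
  rintro ⟨hEWB, hFA⟩
  -- the & position is `u.length` and it is inside the trace
  rw [satAt_Ff] at hFA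
  obtain ⟨ja, -, hja2, hja3⟩ := hFA
  rw [satAt_AA] at hja3
  rw [length_trace] at hja2
  have hampm : u.length < m := by
    have := (word_amp_iff hu_amp hv_amp).mp hja3.2
    omega
  -- the end-of-trace block window
  rw [EWB, satAt_Ff] at hEWB
  obtain ⟨q, -, hq2, hq3⟩ := hEWB
  simp only [satAt_and, satAt_chain, length_trace, satAt_AH] at hq3
  obtain ⟨⟨-, hqh⟩, hm, ⟨-, hendh⟩, hbits⟩ := hq3
  -- the window lies strictly after the &
  have hqu : u.length + 1 ≤ q := by
    by_contra hcon
    push_neg at hcon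
    have hxamp : word u v (q + (u.length - q)) = Sig4.amp := by
      rw [show q + (u.length - q) = u.length by omega]; exact word_amp
    rcases Nat.eq_zero_or_pos (u.length - q) with h0 | hpos
    · rw [h0, Nat.add_zero] at hxamp
      rw [hxamp] at hqh; exact absurd hqh (by simp)
    · rcases Nat.lt_or_ge (u.length - q) (n+1) with hlt | hge
      · have := hbits (u.length - q) hpos (by omega)
        rw [satAt_bitf] at this
        rw [hxamp] at this
        rcases this.2 with h | h <;> simp at h
      · rw [show u.length - q = n + 1 by omega,
          show q + (n+1) = q + n + 1 by omega] at hxamp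
        rw [hxamp] at hendh; exact absurd hendh (by simp)
  have hqj : q = u.length + 1 + (q - (u.length + 1)) := by omega
  obtain ⟨j, hqj⟩ : ∃ j, q = u.length + 1 + j := ⟨q - (u.length + 1), hqj⟩
  subst hqj
  -- window is inside v
  have hjv : j + (n+1) < v.length := by
    by_contra hcon
    push_neg at hcon
    have : word u v (u.length + 1 + j + (n+1)) = Sig4.zero := by
      rw [show u.length + 1 + j + (n+1) = u.length + 1 + (j + (n+1)) by omega]
      exact word_big hcon
    rw [show u.length + 1 + j + (n+1) = u.length + 1 + j + n + 1 by omega] at this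
    rw [this] at hendh; exact absurd hendh (by simp)
  have hxv : ∀ i, i ≤ n + 1 →
      word u v (u.length + 1 + j + i) = v.getD (j + i) Sig4.zero := by
    intro i hi
    rw [show u.length + 1 + j + i = u.length + 1 + (j + i) by omega]
    exact word_v (by omega)
  -- read off the word w from the window
  obtain ⟨w, hwlen, hwget⟩ : ∃ w : List Bool, w.length = n ∧
      ∀ i, i < n → w.getD i false = decide (v.getD (j + 1 + i) Sig4.zero = Sig4.one) := by
    refine ⟨(List.range n).map (fun i => decide (v.getD (j + 1 + i) Sig4.zero = Sig4.one)),
      by simp, ?_⟩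
    intro i hi
    rw [List.getD_eq_getElem _ _ (by simpa using hi)]
    simp
  have hpat : ∀ i, i ≤ n + 1 → v.getD (j + i) Sig4.zero = (blk w).getD i Sig4.zero := by
    intro i hi
    rcases Nat.eq_zero_or_pos i with rfl | hipos
    · rw [blk_getD_zero, Nat.add_zero]
      have h0 := hxv 0 (by omega)
      simp only [Nat.add_zero] at h0
      rw [← h0]
      exact hqh
    rcases Nat.lt_or_ge i (n+1) with hilt | hige
    · -- a bit position
      have hbit := hbits i hipos (by omega)
      rw [satAt_bitf, hxv i (by omega)] at hbit
      obtain ⟨i', rfl⟩ : ∃ i', i = i' + 1 := ⟨i - 1, by omega⟩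
      rw [blk_getD_bit (by omega), hwget i' (by omega),
        show j + 1 + i' = j + (i' + 1) by omega]
      rcases hbit.2 with h | h
      · rw [h]
        have hne : (Sig4.zero = Sig4.one) = False := by simp
        simp [hne, bitSym]
      · rw [h]; simp [bitSym]
    · have hieq : i = n + 1 := by omega
      subst hieq
      have h2 : (blk w).getD (n+1) Sig4.zero = Sig4.hash := by
        rw [← hwlen]; exact blk_getD_last
      rw [h2, hxv (n+1) le_rfl |>.symm, show u.length + 1 + j + (n+1) =
        u.length + 1 + j + n + 1 by omega]
      exact hendh
  -- the window is a block occurring in u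
  obtain ⟨s, t, hst⟩ := hpat_v j w hwlen (by omega) hpat
  have hust : u = s ++ (blk w ++ t) := by rw [← hst]; simp
  have hslen : s.length + (n + 2) ≤ u.length := by
    have := congrArg List.length hust
    simp [length_blk] at this
    omega
  have hupt : ∀ i, i ≤ n + 1 →
      u.getD (s.length + i) Sig4.zero = (blk w).getD i Sig4.zero := by
    intro i hi
    exact getD_of_infix hust (by rw [length_blk]; omega)
  have hxu : ∀ i, i ≤ n + 1 →
      word u v (s.length + i) = (blk w).getD i Sig4.zero := by
    intro i hi
    rw [word_lt (by omega), hupt i hi]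
  -- agreement of the two windows
  have hagree : ∀ i, i ≤ n + 1 →
      word u v (s.length + i) = word u v (u.length + 1 + j + i) := by
    intro i hi
    rw [hxu i hi, hxv i hi, hpat i hi]
  -- now prove the until
  rw [satAt_untl, length_trace]
  refine ⟨s.length, Nat.zero_le _, by omega, ?_, ?_⟩
  · -- Cf holds at s.length
    rw [Cf, satAt_and, satAt_and, satAt_AH]
    refine ⟨⟨by omega, ?_⟩, ?_, ?_⟩
    · have h0 := hxu 0 (by omega)
      simp only [Nat.add_zero] at h0
      exact h0.trans blk_getD_zero
    · rw [satAt_mconj]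
      intro i hi1 hi2
      rw [mi, satAt_and]
      constructor
      · rw [satAt_Xn (by omega : 0 < i), satAt_bitf, length_trace]
        refine ⟨by omega, by omega, ?_⟩
        obtain ⟨i', rfl⟩ : ∃ i', i = i' + 1 := ⟨i - 1, by omega⟩
        rw [hxu (i'+1) (by omega), blk_getD_bit (by omega)]
        exact bitSym_or
      · rw [matchi, satAt_and]
        constructor
        · rw [satAt_impf, satAt_Xn (by omega : 0 < i), satAt_A1, length_trace]
          rintro ⟨-, -, h1⟩
          rw [satAt_EB_iff (by omega : i ≤ n)]
          refine ⟨u.length + 1 + j + i, by omega, by omega, ?_, ?_⟩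
          · rw [← hagree i (by omega), h1]; rfl
          · rw [show u.length + 1 + j + i + (n+1-i) = u.length + 1 + j + n + 1 by omega]
            exact hendh
        · rw [satAt_impf, satAt_Xn (by omega : 0 < i), satAt_A0, length_trace]
          rintro ⟨-, -, h1⟩
          rw [satAt_EB_iff (by omega : i ≤ n)]
          refine ⟨u.length + 1 + j + i, by omega, by omega, ?_, ?_⟩
          · rw [← hagree i (by omega), h1]; rfl
          · rw [show u.length + 1 + j + i + (n+1-i) = u.length + 1 + j + n + 1 by omega]
            exact hendh
    · rw [satAt_Xn (by omega : 0 < n+1), satAt_AH, length_trace]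
      refine ⟨by omega, by omega, ?_⟩
      rw [hxu (n+1) le_rfl, ← hwlen]
      exact blk_getD_last
  · -- no & before s.length
    intro k _ hk
    rw [satAt_not, satAt_AA]
    rintro ⟨-, hamp⟩
    rw [word_lt (by omega)] at hamp
    exact hu_amp _ (getD_mem (by omega)) hamp

end LB
namespace LB
open Sig4 LTLf

/-- BAD: if the prefix of `u & v 0^ω` ending right after an occurrence `s(#w#)t`
of a block in `v` satisfies `psi n`, then `#w#` occurs in `u`. -/
lemma bad {n : ℕ} (hn : 1 ≤ n) {u v s t : List Sig4} {w : List Bool}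
    (hu_amp : ∀ a ∈ u, a ≠ Sig4.amp) (hw : w.length = n)
    (hvst : v = s ++ (blk w ++ t))
    (hsat : LTLf.Sat (psi n)
      (trace (word u v) (u.length + 1 + s.length + (n+2)))) :
    blk w <:+: u := by
  set m := u.length + 1 + s.length + (n+2) with hm
  have hsv : s.length + (n+2) ≤ v.length := by
    have := congrArg List.length hvst
    simp [length_blk, hw] at this
    omega
  have hvpt : ∀ i, i ≤ n+1 →
      v.getD (s.length + i) Sig4.zero = (blk w).getD i Sig4.zero := by
    intro i hi
    exact getD_of_infix hvst (by rw [length_blk]; omega)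
  have hxq : ∀ i, i ≤ n+1 →
      word u v (u.length + 1 + s.length + i) = (blk w).getD i Sig4.zero := by
    intro i hi
    rw [show u.length + 1 + s.length + i = u.length + 1 + (s.length + i) by omega,
      word_v (by omega), hvpt i hi]
  rw [LTLf.Sat, psi, satAt_impf, satAt_and] at hsat
  have hC := hsat ⟨?_, ?_⟩
  rotate_left
  · -- EWB
    rw [EWB, satAt_Ff]
    refine ⟨u.length + 1 + s.length, Nat.zero_le _, by rw [length_trace]; omega, ?_⟩
    rw [satAt_and, satAt_chain, length_trace, satAt_AH, satAt_AH]
    refine ⟨⟨by omega, ?_⟩, by omega, ⟨by omega, ?_⟩, ?_⟩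
    · have h0 := hxq 0 (by omega)
      simp only [Nat.add_zero] at h0
      exact h0.trans blk_getD_zero
    · have h1 := hxq (n+1) le_rfl
      rw [show u.length + 1 + s.length + (n+1) =
        u.length + 1 + s.length + n + 1 by omega] at h1
      rw [h1, ← hw]
      exact blk_getD_last
    · intro i hi1 hi2
      rw [satAt_bitf]
      refine ⟨by omega, ?_⟩
      obtain ⟨i', rfl⟩ : ∃ i', i = i' + 1 := ⟨i - 1, by omega⟩
      rw [hxq (i'+1) (by omega), blk_getD_bit (by omega)]
      exact bitSym_or
  · -- F amp
    rw [satAt_Ff]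
    refine ⟨u.length, Nat.zero_le _, by rw [length_trace]; omega, ?_⟩
    rw [satAt_AA]
    exact ⟨by omega, word_amp⟩
  -- unpack the until
  rw [satAt_untl, length_trace] at hC
  obtain ⟨p, -, hp2, hpC, hpre⟩ := hC
  rw [Cf, satAt_and, satAt_and, satAt_AH] at hpC
  obtain ⟨⟨-, hpH⟩, hmc, hXn⟩ := hpC
  rw [satAt_Xn (by omega : 0 < n+1), satAt_AH, length_trace] at hXn
  obtain ⟨hXn1, -, hXn2⟩ := hXn
  rw [satAt_mconj] at hmc
  -- p is strictly before the &
  have hple : p ≤ u.length := by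
    by_contra hcon
    push_neg at hcon
    have := hpre u.length (Nat.zero_le _) (by omega)
    rw [satAt_not, satAt_AA] at this
    exact this ⟨by omega, word_amp⟩
  have hplt : p < u.length := by
    rcases Nat.lt_or_ge p u.length with h | h
    · exact h
    · exfalso
      have : p = u.length := by omega
      rw [this, word_amp] at hpH
      exact absurd hpH (by simp)
  -- the whole window at p is inside u
  have hwin : p + (n+1) < u.length := by
    by_contra hcon
    push_neg at hcon
    have hxamp : word u v (p + (u.length - p)) = Sig4.amp := by
      rw [show p + (u.length - p) = u.length by omega]; exact word_amp
    rcases Nat.lt_or_ge (u.length - p) (n+1) with hlt | hge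
    · have := hmc (u.length - p) (by omega) (by omega)
      rw [mi, satAt_and, satAt_Xn (by omega : 0 < u.length - p), satAt_bitf] at this
      obtain ⟨⟨-, -, hb⟩, -⟩ := this
      rw [hxamp] at hb
      rcases hb with h | h <;> simp at h
    · rw [show u.length - p = n + 1 by omega] at hxamp
      rw [hxamp] at hXn2
      exact absurd hXn2 (by simp)
  -- pointwise identification of the window at p with blk w
  have hupt : ∀ i, i < (blk w).length →
      u.getD (p + i) Sig4.zero = (blk w).getD i Sig4.zero := by
    intro i hilen
    rw [length_blk, hw] at hilen
    have hi : i ≤ n + 1 := by omega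
    rcases Nat.eq_zero_or_pos i with rfl | hipos
    · rw [Nat.add_zero, blk_getD_zero, ← word_lt (by omega : p < u.length)]
      exact hpH
    rcases Nat.lt_or_ge i (n+1) with hilt | hige
    · -- a matched bit position
      have hmi := hmc i hipos (by omega)
      rw [mi, satAt_and, satAt_Xn (by omega : 0 < i), satAt_bitf, length_trace, matchi,
        satAt_and, satAt_impf, satAt_impf] at hmi
      obtain ⟨⟨-, -, hb⟩, h1imp, h0imp⟩ := hmi
      rw [word_lt (by omega)] at hb
      rcases hb with h | h
      · -- the bit is 0
        have hEB := h0imp (by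
          rw [satAt_Xn (by omega : 0 < i), satAt_A0, length_trace]
          exact ⟨by omega, by omega, by rw [word_lt (by omega)]; exact h⟩)
        rw [satAt_EB_iff (by omega : i ≤ n)] at hEB
        obtain ⟨j', -, hj2, hj3, -⟩ := hEB
        have : j' = u.length + 1 + s.length + i := by omega
        subst this
        rw [hxq i hi] at hj3
        rw [h, hj3]
        rfl
      · -- the bit is 1
        have hEB := h1imp (by
          rw [satAt_Xn (by omega : 0 < i), satAt_A1, length_trace]
          exact ⟨by omega, by omega, by rw [word_lt (by omega)]; exact h⟩)
        rw [satAt_EB_iff (by omega : i ≤ n)] at hEB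
        obtain ⟨j', -, hj2, hj3, -⟩ := hEB
        have : j' = u.length + 1 + s.length + i := by omega
        subst this
        rw [hxq i hi] at hj3
        rw [h, hj3]
        rfl
    · have hieq : i = n + 1 := by omega
      subst hieq
      rw [← word_lt (by omega : p + (n+1) < u.length), hXn2, ← hw]
      exact blk_getD_last.symm
  exact infix_of_getD (by rw [length_blk, hw]; omega) hupt

end LB
namespace LB
open Sig4 LTLf

lemma size_Xn {k : ℕ} {φ : LTLf Sig4} : (Xn k φ).size = φ.size + k := by
  induction k with
  | zero => rfl
  | succ k ih => show (Xn k φ).size + 1 = _; omega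

lemma size_chain {k : ℕ} : (chain k).size = 8 * k + 6 := by
  induction k with
  | zero => rfl
  | succ k ih =>
    show (bitf.size + (chain k).size + 1) + 1 = _
    rw [ih]
    have : bitf.size = 6 := rfl
    omega

lemma size_mi {n i : ℕ} (hi : i ≤ n) : (mi n i).size ≤ 2 * n + i + 40 := by
  simp only [mi, matchi, EB, impf, orf, Ff, atomB, A0, A1, AH, bitf, lastf,
    LTLf.size, size_Xn]
  omega

lemma size_mconj {n : ℕ} : ∀ k, k ≤ n → (mconj n k).size ≤ 1 + k * (5 * n + 41) := by
  intro k
  induction k with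
  | zero => intro _; simp [mconj, LTLf.size]
  | succ k ih =>
    intro hk
    have h1 := size_mi (show k + 1 ≤ n by omega)
    have h2 := ih (by omega)
    have h3 : (mconj n (k+1)).size = (mi n (k+1)).size + (mconj n k).size + 1 := rfl
    rw [Nat.succ_mul]
    omega

lemma size_psi {n : ℕ} (hn : 1 ≤ n) : (psi n).size ≤ 100 * n ^ 2 := by
  have hmc := size_mconj n le_rfl
  have hC : (Cf n).size = 1 + ((mconj n n).size + (n + 2) + 1) + 1 := by
    simp only [Cf, LTLf.size, size_Xn, AH]
    omega
  have hE : (EWB n).size = 8 * n + 10 := by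
    simp only [EWB, Ff, LTLf.size, size_chain, AH]
    omega
  have hpsi : (psi n).size =
      ((EWB n).size + 3 + 1) + ((Cf n).size + 3) + 5 := by
    simp only [psi, impf, orf, Ff, LTLf.size, AA]
    omega
  have hnn : n * (5 * n + 41) = 5 * (n * n) + 41 * n := by ring
  have hsq : n ^ 2 = n * n := sq n
  nlinarith [hmc, Nat.one_le_iff_ne_zero.mp hn, sq_nonneg n, Nat.mul_le_mul hn hn]

end LB
namespace LB
open Sig4 LTLf

lemma mem_of_infix_blocks {n : ℕ} (hn : 1 ≤ n) {ws : List (List Bool)}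
    (hlen : ∀ w ∈ ws, w.length = n) {w : List Bool} (hw : w.length = n)
    (h : blk w <:+: blocks ws) : w ∈ ws := by
  obtain ⟨s, t, hst⟩ := h
  have hst' : blocks ws = s ++ (blk w ++ t) := by rw [← hst]; simp
  apply mem_of_pattern hn ws hlen s.length w hw
  · have := congrArg List.length hst'
    simp [length_blk, hw] at this
    omega
  · intro i hi
    exact getD_of_infix (d := Sig4.zero) hst' (by rw [length_blk, hw]; omega)

lemma good_blocks {n : ℕ} (hn : 1 ≤ n) {ws ws' : List (List Bool)}
    (hlen : ∀ w ∈ ws, w.length = n) (hlen' : ∀ w ∈ ws', w.length = n)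
    (hsub : ∀ w ∈ ws', blk w <:+: blocks ws) (m : ℕ) :
    LTLf.Sat (psi n) (trace (word (blocks ws) (blocks ws')) m) := by
  apply good hn (fun a ha => mem_blocks_ne_amp ha) (fun a ha => mem_blocks_ne_amp ha)
  intro j w hw hjlen hpt
  exact hsub w (mem_of_pattern hn ws' hlen' j w hw hjlen hpt)

lemma word_eq_low {u v v' : List Sig4} {i : ℕ} (h : i ≤ u.length) :
    word u v i = word u v' i := by
  rcases Nat.lt_or_ge i u.length with h' | h'
  · rw [word_lt h', word_lt h']
  · have : i = u.length := by omega
    subst this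
    rw [word_amp, word_amp]

lemma word_shift {u u' v : List Sig4} {i : ℕ} :
    word u v (u.length + 1 + i) = word u' v (u'.length + 1 + i) := by
  rcases Nat.lt_or_ge i v.length with h | h
  · rw [word_v h, word_v h]
  · rw [word_big h, word_big h]

lemma prefixWord_singleton {x : ℕ → Sig4} {m : ℕ} :
    prefixWord (fun i => ({x i} : Set Sig4)) m = trace x m := by
  simp [prefixWord, trace, List.map_map]

theorem main_bound :
    ∃ c : ℕ, 0 < c ∧ ∀ n : ℕ, 1 ≤ n →
      ∃ ψ : LTLf Sig4, LTLf.size ψ ≤ c * n ^ 2 ∧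
        ∀ (S : Type) (inst : Fintype S) (M : NBA (Set Sig4) S),
          M.Lang = pref ψ → 2 ^ 2 ^ n ≤ @Fintype.card S inst := by
  refine ⟨100, by omega, ?_⟩
  intro n hn
  refine ⟨psi n, size_psi hn, ?_⟩
  intro S inst M hM
  classical
  -- the fooling family
  set wst : Finset (Fin n → Bool) → List (List Bool) :=
    fun T => T.toList.map List.ofFn with hwst
  have hlens : ∀ T, ∀ w ∈ wst T, w.length = n := by
    intro T w hw
    rw [hwst, List.mem_map] at hw
    obtain ⟨f, -, rfl⟩ := hw
    simp
  set bl : Finset (Fin n → Bool) → List Sig4 := fun T => blocks (wst T) with hbl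
  -- each x_T lies in the language of M
  have hex : ∀ T : Finset (Fin n → Bool), ∃ r : ℕ → S,
      M.IsRun (fun i => ({word (bl T) (bl T) i} : Set Sig4)) r ∧
      ∀ m : ℕ, ∃ k, m ≤ k ∧ r k ∈ M.acc := by
    intro T
    have hmem : (fun i => ({word (bl T) (bl T) i} : Set Sig4)) ∈ pref (psi n) := by
      intro m _
      rw [prefixWord_singleton]
      exact good_blocks hn (hlens T) (hlens T)
        (fun w hw => infix_blk_blocks hw) m
    rw [← hM] at hmem
    exact hmem
  set F : Finset (Fin n → Bool) → S :=
    fun T => (hex T).choose ((bl T).length + 1) with hF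
  -- the key subset property via splicing
  have hsub : ∀ T T' : Finset (Fin n → Bool), F T = F T' → T' ⊆ T := by
    intro T T' hFF f hf
    set a := (bl T).length + 1 with ha
    set a' := (bl T').length + 1 with ha'
    obtain ⟨hrunT, haccT⟩ := (hex T).choose_spec
    obtain ⟨hrunT', haccT'⟩ := (hex T').choose_spec
    set rT := (hex T).choose with hrT
    set rT' := (hex T').choose with hrT'
    -- the spliced word and run
    set z : ℕ → Sig4 := word (bl T) (bl T') with hz
    set r : ℕ → S := fun i => if i < a then rT i else rT' (i - a + a') with hr
    have hzmem : (fun i => ({z i} : Set Sig4)) ∈ M.Lang := by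
      refine ⟨r, ⟨?_, ?_⟩, ?_⟩
      · rw [hr]
        simp only [if_pos (show 0 < a by omega)]
        exact hrunT.1
      · intro i
        show M.trans (r i) ({z i} : Set Sig4) (r (i+1))
        rcases Nat.lt_or_ge (i+1) a with h1 | h1
        · -- inside u·&
          have hzi : z i = word (bl T) (bl T) i := word_eq_low (by omega)
          have hri : r i = rT i := by rw [hr]; simp only [if_pos (show i < a by omega)]
          have hri1 : r (i+1) = rT (i+1) := by rw [hr]; simp only [if_pos h1]
          rw [hri, hri1, hzi]
          exact hrunT.2 i
        rcases Nat.eq_or_lt_of_le h1 with h2 | h2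
        · -- the boundary step
          have hia : i = (bl T).length := by omega
          have hzi : z i = word (bl T) (bl T) i := word_eq_low (by omega)
          have hri : r i = rT i := by rw [hr]; simp only [if_pos (show i < a by omega)]
          have hFF' : rT a = rT' a' := hFF
          have hri1 : r (i+1) = rT (i+1) := by
            rw [hr]
            simp only [if_neg (show ¬ (i+1 < a) by omega)]
            have h3 : i + 1 - a + a' = a' := by omega
            rw [h3, ← hFF', h2]
          rw [hri, hri1, hzi]
          exact hrunT.2 i
        · -- inside the v-part
          have hri : r i = rT' (i - a + a') := by
            rw [hr]; simp only [if_neg (show ¬ (i < a) by omega)]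
          have hri1 : r (i+1) = rT' (i - a + a' + 1) := by
            rw [hr]; simp only [if_neg (show ¬ (i+1 < a) by omega)]
            congr 1
            omega
          have hzi : z i = word (bl T') (bl T') (i - a + a') := by
            have h4 : i = (bl T).length + 1 + (i - a) := by omega
            have h5 : i - a + a' = (bl T').length + 1 + (i - a) := by omega
            rw [hz, h5]
            conv_lhs => rw [h4]
            exact word_shift
          rw [hri, hri1, hzi]
          exact hrunT'.2 (i - a + a')
      · intro m
        obtain ⟨k', hk1, hk2⟩ := haccT' (m + a + a')
        refine ⟨k' - a' + a, by omega, ?_⟩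
        rw [hr]
        simp only [if_neg (show ¬ (k' - a' + a < a) by omega)]
        have : k' - a' + a - a + a' = k' := by omega
        rw [this]
        exact hk2
    rw [hM] at hzmem
    -- apply BAD to this spliced word
    have hfin : List.ofFn f ∈ wst T' := by
      rw [hwst, List.mem_map]
      exact ⟨f, by rwa [Finset.mem_toList], rfl⟩
    obtain ⟨s, t, hst⟩ := infix_blk_blocks (ws := wst T') hfin
    have hvst : bl T' = s ++ (blk (List.ofFn f) ++ t) := by
      show blocks (wst T') = _
      rw [← hst]; simp
    have hwf : (List.ofFn f).length = n := by simp
    have hsat := hzmem ((bl T).length + 1 + s.length + (n+2)) (by omega)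
    rw [prefixWord_singleton] at hsat
    have hinf : blk (List.ofFn f) <:+: bl T :=
      bad hn (fun x hx => mem_blocks_ne_amp hx) hwf hvst hsat
    have hmem2 : List.ofFn f ∈ wst T :=
      mem_of_infix_blocks hn (hlens T) hwf hinf
    rw [hwst, List.mem_map] at hmem2
    obtain ⟨g, hg, hgf⟩ := hmem2
    have : g = f := List.ofFn_injective hgf
    subst this
    rwa [Finset.mem_toList] at hg
  -- F is injective, so S is big
  have hinj : Function.Injective F := by
    intro T T' h
    exact Finset.Subset.antisymm (hsub T' T h.symm) (hsub T T' h)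
  have hcard := Fintype.card_le_of_injective F hinj
  have h1 : Fintype.card (Finset (Fin n → Bool)) = 2 ^ 2 ^ n := by
    rw [Fintype.card_finset, Fintype.card_fun]
    simp
  omega

end LB

/-- There is a constant c > 0 such that for every n ≥ 1 there is
an LTLf formula ψ_n over the propositions {0,1,#,&} of size at most c·n² such
that every nondeterministic Büchi automaton over the alphabet 2^{0,1,#,&}
recognizing pref(ψ_n) has at least 2^(2^n) states. -/
theorem pref_nba_doubly_exponential_lower_bound :
    ∃ c : ℕ, 0 < c ∧ ∀ n : ℕ, 1 ≤ n →
      ∃ ψ : LTLf Sig4, LTLf.size ψ ≤ c * n ^ 2 ∧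
        ∀ (S : Type) (inst : Fintype S) (M : NBA (Set Sig4) S),
          M.Lang = pref ψ → 2 ^ 2 ^ n ≤ @Fintype.card S inst :=
  LB.main_bound
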